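/- arXiv:2509.17128 — 3 statements merged into one kernel-verified Lean document; each statement's English description precedes it below -/
import Mathlib

section
/- Let X and Y be Poisson random variables with rates λ and μ respectively, with λ, μ ≥ 0. Then the total variation distance between their distributions satisfies sup_{k ∈ ℕ} |P(X > k) - P(Y > k)| ≤ C |λ - μ| / (1 + min(λ, μ))^{1/2} for some universal constant C. -/
open MeasureTheory ProbabilityTheory
open scoped Nat

/-- Stirling lower bound: `√(2n) * (n/e)^n ≤ n!` for `n ≥ 1`. -/
lemma AL_stirling_lower (n : ℕ) (hn : 1 ≤ n) :
    Real.sqrt (2 * n) * ((n : ℝ) / Real.exp 1) ^ n ≤ (n ! : ℝ) := by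
  obtain ⟨j, rfl⟩ := Nat.exists_eq_add_of_le hn
  have h1 : Real.sqrt Real.pi ≤ Stirling.stirlingSeq (j + 1) := by
    have hlim : Filter.Tendsto (Stirling.stirlingSeq ∘ Nat.succ) Filter.atTop
        (nhds (Real.sqrt Real.pi)) :=
      (Filter.tendsto_add_atTop_iff_nat 1).mpr Stirling.tendsto_stirlingSeq_sqrt_pi
    exact Stirling.stirlingSeq'_antitone.le_of_tendsto hlim j
  have h2 : (1 : ℝ) ≤ Stirling.stirlingSeq (1 + j) := by
    rw [add_comm]
    refine le_trans ?_ h1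
    rw [show (1:ℝ) = Real.sqrt 1 by simp]
    exact Real.sqrt_le_sqrt (by linarith [Real.pi_gt_three])
  rw [Stirling.stirlingSeq, le_div_iff₀ (by positivity)] at h2
  rw [one_mul] at h2
  convert h2 using 3

/-- `e^{-t} t^n ≤ e^{-n} n^n` for `t ≥ 0`. -/
lemma AL_exp_mul_pow_le {t : ℝ} (ht : 0 ≤ t) (n : ℕ) :
    Real.exp (-t) * t ^ n ≤ Real.exp (-(n : ℝ)) * (n : ℝ) ^ n := by
  rcases Nat.eq_zero_or_pos n with rfl | hn
  · simpa using Real.exp_le_one_iff.mpr (neg_nonpos.mpr ht)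
  · have hn' : (0 : ℝ) < n := by exact_mod_cast hn
    have h1 : t / n ≤ Real.exp (t / n - 1) := by
      have := Real.add_one_le_exp (t / n - 1); linarith
    have h2 : (t / n) ^ n ≤ Real.exp (t / n - 1) ^ n :=
      pow_le_pow_left₀ (by positivity) h1 n
    rw [← Real.exp_nat_mul] at h2
    have h3 : (n : ℝ) * (t / n - 1) = t - n := by field_simp
    rw [h3, div_pow] at h2
    have h4 : t ^ n ≤ Real.exp (t - n) * (n : ℝ) ^ n := by
      rw [div_le_iff₀ (by positivity)] at h2
      linarith
    calc Real.exp (-t) * t ^ n ≤ Real.exp (-t) * (Real.exp (t - n) * (n : ℝ) ^ n) := by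
          exact mul_le_mul_of_nonneg_left h4 (Real.exp_nonneg _)
      _ = Real.exp (-(n : ℝ)) * (n : ℝ) ^ n := by
          rw [← mul_assoc, ← Real.exp_add]; ring_nf

/-- `n! ≤ k! * n^(n-k)` for `k ≤ n`. -/
lemma AL_factorial_le (k d : ℕ) : (k + d)! ≤ k ! * (k + d) ^ d := by
  induction d with
  | zero => simp
  | succ d ih =>
      rw [show k + (d+1) = (k+d)+1 by ring, Nat.factorial_succ, pow_succ]
      calc (k + d + 1) * (k + d)! ≤ (k + d + 1) * (k ! * (k + d) ^ d) :=
            Nat.mul_le_mul_left _ ih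
        _ ≤ (k + d + 1) * (k ! * (k + d + 1) ^ d) :=
            Nat.mul_le_mul_left _ (Nat.mul_le_mul_left _
              (Nat.pow_le_pow_left (Nat.le_succ _) d))
        _ = k ! * ((k + d + 1) ^ d * (k + d + 1)) := by ring

/-- pmf monotone in `k` up to `t`: `e^{-t}t^k/k! ≤ e^{-t}t^n/n!` when `k ≤ n ≤ t`. -/
lemma AL_pmf_mono {t : ℝ} {k n : ℕ} (hk : k ≤ n) (hn : (n : ℝ) ≤ t) :
    Real.exp (-t) * t ^ k / k ! ≤ Real.exp (-t) * t ^ n / n ! := by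
  have ht0 : (0 : ℝ) ≤ t := le_trans (by positivity) hn
  obtain ⟨d, rfl⟩ := Nat.exists_eq_add_of_le hk
  have h1 : ((k + d)! : ℝ) ≤ (k ! : ℝ) * t ^ d := by
    calc ((k + d)! : ℝ) ≤ (k ! : ℝ) * ((k + d : ℕ) : ℝ) ^ d := by
          exact_mod_cast AL_factorial_le k d
      _ ≤ (k ! : ℝ) * t ^ d := by
          exact mul_le_mul_of_nonneg_left (pow_le_pow_left₀ (by positivity) hn d)
            (by positivity)
  rw [div_le_div_iff₀ (by positivity) (by positivity)]
  calc Real.exp (-t) * t ^ k * ((k+d)! : ℝ) ≤ Real.exp (-t) * t ^ k * ((k ! : ℝ) * t ^ d) := by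
        exact mul_le_mul_of_nonneg_left h1 (by positivity)
    _ = Real.exp (-t) * t ^ (k + d) * (k ! : ℝ) := by rw [pow_add]; ring

/-- `e^{-t} t^n / n! ≤ 1/√(2n)` for `n ≥ 1`, `t ≥ 0`. -/
lemma AL_pmf_le_inv_sqrt {t : ℝ} (ht : 0 ≤ t) {n : ℕ} (hn : 1 ≤ n) :
    Real.exp (-t) * t ^ n / n ! ≤ 1 / Real.sqrt (2 * n) := by
  have hn' : (0 : ℝ) < n := by exact_mod_cast hn
  have hs : (0 : ℝ) < Real.sqrt (2 * n) := Real.sqrt_pos.mpr (by positivity)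
  have hnum : Real.exp (-t) * t ^ n ≤ ((n : ℝ) / Real.exp 1) ^ n := by
    calc Real.exp (-t) * t ^ n ≤ Real.exp (-(n : ℝ)) * (n : ℝ) ^ n := AL_exp_mul_pow_le ht n
      _ = ((n : ℝ) / Real.exp 1) ^ n := by
          rw [div_pow, ← Real.exp_nat_mul, mul_one, Real.exp_neg]; ring
  have hden := AL_stirling_lower n hn
  have hfac : (0 : ℝ) < (n ! : ℝ) := by positivity
  rw [div_le_div_iff₀ hfac hs]
  calc Real.exp (-t) * t ^ n * Real.sqrt (2 * n)
      ≤ ((n : ℝ) / Real.exp 1) ^ n * Real.sqrt (2 * n) :=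
        mul_le_mul_of_nonneg_right hnum hs.le
    _ = Real.sqrt (2 * n) * ((n : ℝ) / Real.exp 1) ^ n := by ring
    _ ≤ (n ! : ℝ) := hden
    _ = 1 * (n ! : ℝ) := (one_mul _).symm

/-- Key uniform bound: `e^{-t} t^k / k! ≤ 2 / √(1+t)` for all `t ≥ 0`, `k`. -/
lemma AL_pmf_le {t : ℝ} (ht : 0 ≤ t) (k : ℕ) :
    Real.exp (-t) * t ^ k / k ! ≤ 2 / Real.sqrt (1 + t) := by
  have hs : (0 : ℝ) < Real.sqrt (1 + t) := Real.sqrt_pos.mpr (by linarith)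
  rcases lt_or_ge t 3 with ht3 | ht3
  · -- small t: pmf ≤ 1 and 2/√(1+t) ≥ 1
    have h1 : Real.exp (-t) * t ^ k / k ! ≤ 1 := by
      rcases Nat.eq_zero_or_pos k with rfl | hk
      · simpa using Real.exp_le_one_iff.mpr (neg_nonpos.mpr ht)
      · refine le_trans (AL_pmf_le_inv_sqrt ht hk) ?_
        rw [div_le_one (Real.sqrt_pos.mpr (by positivity))]
        rw [show (1:ℝ) = Real.sqrt 1 by simp]
        apply Real.sqrt_le_sqrt
        have : (1 : ℝ) ≤ (k : ℝ) := by exact_mod_cast hk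
        linarith
    refine h1.trans ?_
    rw [le_div_iff₀ hs, one_mul]
    rw [show (2:ℝ) = Real.sqrt 4 by
      rw [show (4:ℝ) = 2^2 by norm_num, Real.sqrt_sq (by norm_num)]]
    exact Real.sqrt_le_sqrt (by linarith)
  · -- large t
    have hfloor : (3 : ℕ) ≤ ⌊t⌋₊ := Nat.le_floor (by exact_mod_cast ht3)
    have hfl : ((⌊t⌋₊ : ℝ)) ≤ t := Nat.floor_le ht
    have hfl1 : t - 1 ≤ (⌊t⌋₊ : ℝ) := by
      have := Nat.lt_floor_add_one t; linarith
    have step : ∀ n : ℕ, 1 ≤ n → 2 * t - 2 ≤ 2 * (n : ℝ) →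
        1 / Real.sqrt (2 * n) ≤ 2 / Real.sqrt (1 + t) := by
      intro n hn1 hnt
      have h2n : (1 : ℝ) + t ≤ 2 * n := by linarith
      calc 1 / Real.sqrt (2 * n) ≤ 1 / Real.sqrt (1 + t) :=
            one_div_le_one_div_of_le hs (Real.sqrt_le_sqrt h2n)
        _ ≤ 2 / Real.sqrt (1 + t) := by
            gcongr; norm_num
    rcases le_total k ⌊t⌋₊ with hk | hk
    · -- k ≤ ⌊t⌋₊ : increase k to the floor
      refine le_trans (AL_pmf_mono hk hfl) ?_
      refine le_trans (AL_pmf_le_inv_sqrt ht (by omega)) (step _ (by omega) ?_)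
      linarith
    · -- ⌊t⌋₊ ≤ k
      have hk3 : 3 ≤ k := le_trans hfloor hk
      refine le_trans (AL_pmf_le_inv_sqrt ht (by omega)) (step _ (by omega) ?_)
      have : ((⌊t⌋₊ : ℝ)) ≤ (k : ℝ) := by exact_mod_cast hk
      linarith

/-- The truncated Poisson CDF as a real function of the rate. -/
noncomputable def ALcdf (k : ℕ) (t : ℝ) : ℝ :=
  ∑ j ∈ Finset.range (k + 1), Real.exp (-t) * t ^ j / j !

lemma AL_hasDerivAt_term (j : ℕ) (t : ℝ) :
    HasDerivAt (fun t => Real.exp (-t) * t ^ (j+1) / (j+1)!)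
      (Real.exp (-t) * t ^ j / (j !) - Real.exp (-t) * t ^ (j+1) / ((j+1)!)) t := by
  have he : HasDerivAt (fun t : ℝ => Real.exp (-t)) (-Real.exp (-t)) t := by
    simpa using (hasDerivAt_id t).neg.exp
  have hp : HasDerivAt (fun t : ℝ => t ^ (j+1)) ((j+1) * t ^ j) t := by
    simpa using hasDerivAt_pow (j+1) t
  have := (he.mul hp).div_const ((j+1)! : ℝ)
  refine this.congr_deriv ?_
  have hfac : ((j+1)! : ℝ) = (j+1) * (j ! : ℝ) := by
    rw [Nat.factorial_succ]; push_cast; ring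
  have hj : (0:ℝ) < (j ! : ℝ) := by positivity
  rw [hfac]
  field_simp
  ring

lemma AL_hasDerivAt_cdf (k : ℕ) (t : ℝ) :
    HasDerivAt (ALcdf k) (-(Real.exp (-t) * t ^ k / k !)) t := by
  induction k with
  | zero =>
      have he : HasDerivAt (fun t : ℝ => Real.exp (-t)) (-Real.exp (-t)) t := by
        simpa using (hasDerivAt_id t).neg.exp
      have : ALcdf 0 = fun t : ℝ => Real.exp (-t) := by
        funext t; simp [ALcdf]
      rw [this]
      simpa using he
  | succ k ih =>
      have hsum : ALcdf (k+1) = fun t => ALcdf k t +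
          Real.exp (-t) * t ^ (k+1) / (k+1)! := by
        funext t; simp [ALcdf, Finset.sum_range_succ]
      rw [hsum]
      have := ih.add (AL_hasDerivAt_term k t)
      refine this.congr_deriv ?_
      ring

lemma AL_cdf_nonneg (k : ℕ) (t : ℝ) (ht : 0 ≤ t) : 0 ≤ ALcdf k t := by
  refine Finset.sum_nonneg fun j _ => by positivity

/-- The tail of the Poisson measure in terms of `ALcdf`. -/
lemma AL_tail (r : NNReal) (k : ℕ) :
    (poissonMeasure r {n | k < n}).toReal = 1 - ALcdf k (r : ℝ) := by
  have hset : {n : ℕ | k < n} = (↑(Finset.range (k+1)) : Set ℕ)ᶜ := by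
    ext n
    simp only [Finset.coe_range, Set.mem_compl_iff, Set.mem_Iio, not_lt, Set.mem_setOf_eq]
    omega
  have h1 : poissonMeasure r ↑(Finset.range (k+1)) = ENNReal.ofReal (ALcdf k (r : ℝ)) := by
    rw [← sum_measure_singleton, ALcdf,
      ENNReal.ofReal_sum_of_nonneg (fun j _ => by positivity)]
    simp only [poissonMeasure_singleton]
  have hle : ENNReal.ofReal (ALcdf k (r : ℝ)) ≤ 1 := h1 ▸ prob_le_one
  rw [hset, prob_compl_eq_one_sub MeasurableSet.of_discrete, h1,
    ENNReal.toReal_sub_of_le hle ENNReal.one_ne_top, ENNReal.toReal_one,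
    ENNReal.toReal_ofReal (AL_cdf_nonneg k _ r.coe_nonneg)]

theorem AL_main :
    ∃ C : ℝ, 0 < C ∧
      ∀ {Ω Ω' : Type} [MeasurableSpace Ω] [MeasurableSpace Ω']
        (P : Measure Ω) (P' : Measure Ω') [IsProbabilityMeasure P] [IsProbabilityMeasure P']
        (X : Ω → ℕ) (Y : Ω' → ℕ) (l m : NNReal),
        Measure.map X P = poissonMeasure l →
        Measure.map Y P' = poissonMeasure m →
        ∀ k : ℕ,
          |(P {ω | k < X ω}).toReal - (P' {ω | k < Y ω}).toReal| ≤
            C * |(l : ℝ) - (m : ℝ)| / Real.sqrt (1 + min (l : ℝ) (m : ℝ)) := by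
  refine ⟨2, by norm_num, ?_⟩
  intro Ω Ω' _ _ P P' _ _ X Y l m hX hY k
  -- `X` and `Y` are a.e. measurable
  have hXm : AEMeasurable X P := by
    by_contra h
    rw [Measure.map_of_not_aemeasurable h] at hX
    have := congrArg (fun μ : Measure ℕ => μ Set.univ) hX
    simp [measure_univ] at this
  have hYm : AEMeasurable Y P' := by
    by_contra h
    rw [Measure.map_of_not_aemeasurable h] at hY
    have := congrArg (fun μ : Measure ℕ => μ Set.univ) hY
    simp [measure_univ] at this
  have hPX : (P {ω | k < X ω}).toReal = 1 - ALcdf k (l : ℝ) := by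
    rw [show {ω | k < X ω} = X ⁻¹' {n | k < n} from rfl,
      ← Measure.map_apply_of_aemeasurable hXm MeasurableSet.of_discrete, hX, AL_tail]
  have hPY : (P' {ω | k < Y ω}).toReal = 1 - ALcdf k (m : ℝ) := by
    rw [show {ω | k < Y ω} = Y ⁻¹' {n | k < n} from rfl,
      ← Measure.map_apply_of_aemeasurable hYm MeasurableSet.of_discrete, hY, AL_tail]
  rw [hPX, hPY]
  set a : ℝ := min (l : ℝ) (m : ℝ) with ha
  have ha0 : 0 ≤ a := le_min l.coe_nonneg m.coe_nonneg
  have hsa : (0 : ℝ) < Real.sqrt (1 + a) := Real.sqrt_pos.mpr (by linarith)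
  -- MVT bound
  have hmvt : ‖ALcdf k (l : ℝ) - ALcdf k (m : ℝ)‖ ≤
      (2 / Real.sqrt (1 + a)) * ‖(l : ℝ) - (m : ℝ)‖ := by
    refine Convex.norm_image_sub_le_of_norm_hasDerivWithin_le
      (f' := fun x => -(Real.exp (-x) * x ^ k / k !))
      (fun x _ => (AL_hasDerivAt_cdf k x).hasDerivWithinAt) ?_ (convex_Ici a)
      (Set.mem_Ici.mpr (min_le_right _ _)) (Set.mem_Ici.mpr (min_le_left _ _))
    intro x hx
    have hax : a ≤ x := hx
    have hx0 : 0 ≤ x := le_trans ha0 hax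
    rw [Real.norm_eq_abs, abs_neg, abs_of_nonneg (by positivity)]
    refine le_trans (AL_pmf_le hx0 k) ?_
    gcongr

  rw [Real.norm_eq_abs, Real.norm_eq_abs] at hmvt
  calc |1 - ALcdf k (l:ℝ) - (1 - ALcdf k (m:ℝ))| = |ALcdf k (l:ℝ) - ALcdf k (m:ℝ)| := by
        rw [show (1 - ALcdf k (l:ℝ) - (1 - ALcdf k (m:ℝ))) =
          -(ALcdf k (l:ℝ) - ALcdf k (m:ℝ)) by ring, abs_neg]
    _ ≤ (2 / Real.sqrt (1 + a)) * |(l : ℝ) - (m : ℝ)| := hmvt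
    _ = 2 * |(l : ℝ) - (m : ℝ)| / Real.sqrt (1 + a) := by ring

/-- Total-variation-type bound between Poisson tail probabilities (Adell–Lekuona):
there is a universal constant `C` such that for Poisson random variables `X`, `Y` with
rates `λ`, `μ`, `sup_k |P(X > k) - P(Y > k)| ≤ C |λ - μ| / (1 + min(λ, μ))^{1/2}`. -/
theorem poisson_tail_dist_le :
    ∃ C : ℝ, 0 < C ∧
      ∀ {Ω Ω' : Type} [MeasurableSpace Ω] [MeasurableSpace Ω']
        (P : Measure Ω) (P' : Measure Ω') [IsProbabilityMeasure P] [IsProbabilityMeasure P']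
        (X : Ω → ℕ) (Y : Ω' → ℕ) (l m : NNReal),
        Measure.map X P = poissonMeasure l →
        Measure.map Y P' = poissonMeasure m →
        ∀ k : ℕ,
          |(P {ω | k < X ω}).toReal - (P' {ω | k < Y ω}).toReal| ≤
            C * |(l : ℝ) - (m : ℝ)| / Real.sqrt (1 + min (l : ℝ) (m : ℝ)) := by
  exact AL_main
end

section
/- Suppose p²(1-ρ_p²)^{(n-2)/2} → e_n as p → ∞ for a finite constant e_n ≥ 0 and fixed n > 2. Then η_p := p(p-1) P_0(ρ_p, n)/2 → e_n κ_n / 2, where κ_n = a_n/(n-2) and a_n = 2Γ((n-1)/2)/(√π Γ((n-2)/2)). -/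
open Real Filter MeasureTheory

lemma integrable_aux {α : ℝ} (hα : -1 < α) {r : ℝ} (hr : 0 ≤ r) (hr1 : r ≤ 1) :
    IntervalIntegrable (fun t => (1 - t ^ 2) ^ α) volume r 1 := by
  have h1 : IntervalIntegrable (fun x : ℝ => x ^ α) volume 0 (1 - r) :=
    intervalIntegral.intervalIntegrable_rpow' hα
  have h2 : IntervalIntegrable (fun x : ℝ => (1 - x) ^ α) volume r 1 := by
    simpa using (h1.comp_sub_left 1).symm
  have hcont : ContinuousOn (fun t : ℝ => (1 + t) ^ α) (Set.uIcc r 1) := by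
    apply continuousOn_of_forall_continuousAt
    intro t ht
    rw [Set.uIcc_of_le hr1] at ht
    have : (0:ℝ) < 1 + t := by nlinarith [ht.1]
    exact (Real.continuousAt_rpow_const _ _ (Or.inl this.ne')).comp
      (by fun_prop : ContinuousAt (fun t : ℝ => 1 + t) t)
  have h3 := h2.continuousOn_mul hcont
  rw [intervalIntegrable_iff] at h3 ⊢
  apply h3.congr_fun ?_ measurableSet_uIoc
  intro t ht
  rw [Set.uIoc_of_le hr1] at ht
  have h0t : 0 ≤ t := le_of_lt (lt_of_le_of_lt hr ht.1)
  have h1t : t ≤ 1 := ht.2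
  have h : (1 : ℝ) - t ^ 2 = (1 + t) * (1 - t) := by ring
  show (1 + t) ^ α * (1 - t) ^ α = (1 - t ^ 2) ^ α
  rw [h, Real.mul_rpow (by linarith) (by linarith)]

lemma integral_t_mul {c : ℝ} (hc : 0 < c) {r : ℝ} (hr : 0 ≤ r) (hr1 : r ≤ 1) :
    ∫ t in r..1, t * (1 - t ^ 2) ^ (c - 1) = (1 - r ^ 2) ^ c / (2 * c) := by
  have hcont : ContinuousOn (fun t : ℝ => -((1 - t ^ 2) ^ c) / (2 * c)) (Set.Icc r 1) := by
    apply Continuous.continuousOn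
    apply Continuous.div_const
    apply Continuous.neg
    apply continuous_iff_continuousAt.2
    intro t
    exact (Real.continuousAt_rpow_const _ _ (Or.inr hc.le)).comp
      (by fun_prop : ContinuousAt (fun t : ℝ => 1 - t ^ 2) t)
  have hint : IntervalIntegrable (fun t => t * (1 - t ^ 2) ^ (c - 1)) volume r 1 := by
    apply (integrable_aux (by linarith) hr hr1).continuousOn_mul
    fun_prop
  have hderiv : ∀ t ∈ Set.Ioo r 1,
      HasDerivWithinAt (fun t : ℝ => -((1 - t ^ 2) ^ c) / (2 * c))
        (t * (1 - t ^ 2) ^ (c - 1)) (Set.Ioi t) t := by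
    intro t ht
    have h0t : 0 ≤ t := le_trans hr ht.1.le
    have hpos : (0:ℝ) < 1 - t ^ 2 := by nlinarith [ht.2]
    have h1 : HasDerivAt (fun t : ℝ => 1 - t ^ 2) (-(2 * t)) t := by
      simpa using ((hasDerivAt_pow 2 t).const_sub 1)
    have h2 := ((h1.rpow_const (p := c) (Or.inl hpos.ne')).neg.div_const (2 * c)).hasDerivWithinAt
      (s := Set.Ioi t)
    refine h2.congr_deriv ?_
    rw [div_eq_iff (by positivity)]
    ring
  have := intervalIntegral.integral_eq_sub_of_hasDeriv_right_of_le hr1 hcont hderiv hint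
  rw [this]
  norm_num [Real.zero_rpow hc.ne']
  ring

lemma F_bounds {c : ℝ} (hc : 0 < c) {r : ℝ} (hr : 0 ≤ r) (hr1 : r ≤ 1) :
    (1 - r ^ 2) ^ c / (2 * c) ≤ (∫ t in r..1, (1 - t ^ 2) ^ (c - 1)) ∧
      r * ∫ t in r..1, (1 - t ^ 2) ^ (c - 1) ≤ (1 - r ^ 2) ^ c / (2 * c) := by
  have hintg : IntervalIntegrable (fun t => (1 - t ^ 2) ^ (c - 1)) volume r 1 :=
    integrable_aux (by linarith) hr hr1
  have hint : IntervalIntegrable (fun t => t * (1 - t ^ 2) ^ (c - 1)) volume r 1 :=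
    hintg.continuousOn_mul (by fun_prop)
  have hnn : ∀ t ∈ Set.Icc r 1, 0 ≤ (1 - t ^ 2) ^ (c - 1) := fun t ht =>
    Real.rpow_nonneg (by nlinarith [ht.1, ht.2]) _
  constructor
  · rw [← integral_t_mul hc hr hr1]
    apply intervalIntegral.integral_mono_on hr1 hint hintg
    intro t ht
    nlinarith [hnn t ht, ht.2]
  · rw [← integral_t_mul hc hr hr1, ← intervalIntegral.integral_const_mul]
    apply intervalIntegral.integral_mono_on hr1 (hintg.const_mul r) hint
    intro t ht
    nlinarith [hnn t ht, ht.1]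

/-- The normalizing constant `a_n = 2Γ((n-1)/2) / (√π Γ((n-2)/2))`. -/
noncomputable def sphericalConst (n : ℕ) : ℝ :=
  2 * Real.Gamma (((n : ℝ) - 1) / 2) / (Real.sqrt π * Real.Gamma (((n : ℝ) - 2) / 2))

/-- The spherical cap probability `P_0(ρ, n) = a_n ∫_ρ^1 (1-t²)^{(n-4)/2} dt`. -/
noncomputable def sphericalCapProb (ρ : ℝ) (n : ℕ) : ℝ :=
  sphericalConst n * ∫ t in ρ..1, (1 - t ^ 2) ^ (((n : ℝ) - 4) / 2)

open Filter

/-- If `p² (1-ρ_p²)^{(n-2)/2} → e_n` for a finite constant `e_n ≥ 0` and fixed `n > 2`, then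
`η_p = p(p-1) P_0(ρ_p, n)/2 → e_n κ_n / 2`, where `κ_n = a_n/(n-2)`. -/
theorem eta_tendsto_of_scaling {n : ℕ} (hn : 2 < n)
    (ρ : ℕ → ℝ) (hρ : ∀ p, ρ p ∈ Set.Ico (0 : ℝ) 1)
    (e : ℝ) (he : 0 ≤ e)
    (hscale : Tendsto (fun p : ℕ => (p : ℝ) ^ 2 * (1 - ρ p ^ 2) ^ (((n : ℝ) - 2) / 2))
      atTop (nhds e)) :
    Tendsto (fun p : ℕ => (p : ℝ) * ((p : ℝ) - 1) * sphericalCapProb (ρ p) n / 2)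
      atTop (nhds (e * (sphericalConst n / ((n : ℝ) - 2)) / 2)) := by
  have hn3 : (3 : ℝ) ≤ (n : ℝ) := by exact_mod_cast hn
  set c : ℝ := ((n : ℝ) - 2) / 2 with hc_def
  have hc : 0 < c := by rw [hc_def]; linarith
  have hA : 0 < sphericalConst n := by
    unfold sphericalConst
    have h1 : 0 < Real.Gamma (((n : ℝ) - 1) / 2) := Real.Gamma_pos_of_pos (by linarith)
    have h2 : 0 < Real.Gamma (((n : ℝ) - 2) / 2) := Real.Gamma_pos_of_pos (by linarith)
    have h3 : 0 < Real.sqrt π := Real.sqrt_pos.2 Real.pi_pos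
    positivity
  set A := sphericalConst n with hA_def
  have hx0 : ∀ p, 0 ≤ 1 - ρ p ^ 2 := fun p => by nlinarith [(hρ p).1, (hρ p).2]
  -- Step 1 : (1 - ρ p ^ 2) ^ c → 0
  have hp2 : Tendsto (fun p : ℕ => ((p : ℝ) ^ 2)) atTop atTop :=
    (tendsto_pow_atTop two_ne_zero).comp tendsto_natCast_atTop_atTop
  have hxc : Tendsto (fun p : ℕ => (1 - ρ p ^ 2) ^ c) atTop (nhds 0) := by
    have h1 : Tendsto (fun p : ℕ => ((p : ℝ) ^ 2 * (1 - ρ p ^ 2) ^ c) * ((p : ℝ) ^ 2)⁻¹)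
        atTop (nhds (e * 0)) := hscale.mul hp2.inv_tendsto_atTop
    rw [mul_zero] at h1
    apply h1.congr'
    filter_upwards [eventually_ge_atTop 1] with p hp
    have hpne : ((p : ℝ) : ℝ) ≠ 0 := by positivity
    field_simp
  -- Step 2 : 1 - ρ p ^ 2 → 0
  have hxm : Tendsto (fun p : ℕ => 1 - ρ p ^ 2) atTop (nhds 0) := by
    have h2 := (Real.continuousAt_rpow_const 0 c⁻¹ (Or.inr (by positivity))).tendsto.comp hxc
    rw [Real.zero_rpow (inv_ne_zero hc.ne')] at h2
    apply h2.congr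
    intro p
    exact Real.rpow_rpow_inv (hx0 p) hc.ne'
  -- Step 3 : ρ p → 1
  have hρ1 : Tendsto ρ atTop (nhds 1) := by
    have hsq : Tendsto (fun p : ℕ => ρ p ^ 2) atTop (nhds 1) := by
      have := tendsto_const_nhds (x := (1 : ℝ)) (f := atTop (α := ℕ)) |>.sub hxm
      simpa using this
    have := (Real.continuous_sqrt.tendsto 1).comp hsq
    rw [Real.sqrt_one] at this
    apply this.congr
    intro p
    exact Real.sqrt_sq (hρ p).1
  -- Limits of bounding sequences
  have hinv : Tendsto (fun p : ℕ => (1 - (p : ℝ)⁻¹)) atTop (nhds 1) := by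
    simpa using tendsto_const_nhds (x := (1:ℝ)) (f := atTop (α := ℕ)) |>.sub
      tendsto_inv_atTop_nhds_zero_nat
  set L : ℕ → ℝ := fun p =>
    A * ((1 - (p : ℝ)⁻¹) * ((p : ℝ) ^ 2 * (1 - ρ p ^ 2) ^ c)) / (4 * c) with hL_def
  have hL : Tendsto L atTop (nhds (A * (1 * e) / (4 * c))) :=
    ((hinv.mul hscale).const_mul A).div_const (4 * c)
  have hU : Tendsto (fun p => L p / ρ p) atTop (nhds (A * (1 * e) / (4 * c) / 1)) :=
    hL.div hρ1 one_ne_zero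
  rw [div_one] at hU
  have htarget : e * (A / ((n : ℝ) - 2)) / 2 = A * (1 * e) / (4 * c) := by
    rw [hc_def]
    have : (n : ℝ) - 2 ≠ 0 := by linarith
    field_simp
    ring
  rw [htarget]
  have hexp : ((n : ℝ) - 4) / 2 = c - 1 := by rw [hc_def]; ring
  apply tendsto_of_tendsto_of_tendsto_of_le_of_le' hL hU
  · -- lower bound
    filter_upwards [eventually_ge_atTop 1] with p hp
    have hpR : (1 : ℝ) ≤ (p : ℝ) := by exact_mod_cast hp
    have hpne : ((p : ℝ)) ≠ 0 := by positivity
    have key := (F_bounds hc (hρ p).1 (hρ p).2.le).1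
    simp only [hL_def, sphericalCapProb, hexp, ← hA_def]
    set F := ∫ t in ρ p..1, (1 - t ^ 2) ^ (c - 1) with hF_def
    set x := (1 - ρ p ^ 2) ^ c with hx_def
    have hmx : (1 - (p : ℝ)⁻¹) * ((p : ℝ) ^ 2 * x) = ((p : ℝ) * ((p : ℝ) - 1)) * x := by
      field_simp
    rw [hmx]
    have hmnn : 0 ≤ (p : ℝ) * ((p : ℝ) - 1) := by nlinarith
    rw [div_le_div_iff₀ (by positivity) two_pos]
    have key' : x ≤ F * (2 * c) := (div_le_iff₀ (by positivity)).1 key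
    nlinarith [mul_le_mul_of_nonneg_left key' (mul_nonneg hmnn hA.le)]
  · -- upper bound
    filter_upwards [eventually_ge_atTop 1,
      hρ1.eventually (eventually_gt_nhds (by norm_num : (1:ℝ)/2 < 1))] with p hp hρp
    have hpR : (1 : ℝ) ≤ (p : ℝ) := by exact_mod_cast hp
    have hpne : ((p : ℝ)) ≠ 0 := by positivity
    have hρpos : 0 < ρ p := lt_trans (by norm_num) hρp
    have key := (F_bounds hc (hρ p).1 (hρ p).2.le).2
    simp only [hL_def, sphericalCapProb, hexp, ← hA_def]
    set F := ∫ t in ρ p..1, (1 - t ^ 2) ^ (c - 1) with hF_def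
    set x := (1 - ρ p ^ 2) ^ c with hx_def
    have hmx : (1 - (p : ℝ)⁻¹) * ((p : ℝ) ^ 2 * x) = ((p : ℝ) * ((p : ℝ) - 1)) * x := by
      field_simp
    rw [hmx, div_div]
    have hmnn : 0 ≤ (p : ℝ) * ((p : ℝ) - 1) := by nlinarith
    rw [div_le_div_iff₀ two_pos (by positivity)]
    have key' : (ρ p * F) * (2 * c) ≤ x := (le_div_iff₀ (by positivity)).1 key
    nlinarith [mul_le_mul_of_nonneg_left key' (mul_nonneg hmnn hA.le)]
end

section
/- Let U be an (n-1)×p real matrix with n-1 ≤ p such that U U^⊤ is invertible, and define A = (U U^⊤)⁻¹, B = U^⊤ A U, F = A U. For j ≠ k with B_{jj} ≠ 1 and B_{kj} ≠ 0, the k-th entry of D_j^{-1/2} (U^{-j})^⊤ (A + (1/(1-B_{jj})) A U_j U_j^⊤ A) U_j equals (B_{kj}/(1-B_{jj})) · ‖F_k + (B_{kj}/(1-B_{jj})) F_j‖⁻¹, where D_j is the diagonal of (U^{-j})^⊤(U^{-j}(U^{-j})^⊤)⁻² U^{-j} and U^{-j} is U with column j removed (assuming U^{-j}(U^{-j})^⊤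 invertible). -/
open Matrix

/-- Euclidean norm of a finite real vector. -/
noncomputable def vecNorm {m : ℕ} (v : Fin m → ℝ) : ℝ :=
  Real.sqrt (∑ i, v i ^ 2)

/-- Rank-one-update identity underlying the scalable PARSEC algorithm (Algorithm 2):
with `A = (U Uᵀ)⁻¹`, `B = Uᵀ A U`, `F = A U`, and `D_j` the diagonal of
`(U^{-j})ᵀ (U^{-j} (U^{-j})ᵀ)⁻² U^{-j}`, for `j ≠ k` with `B_{jj} ≠ 1` and `B_{kj} ≠ 0`,
the `k`-th entry of `D_j^{-1/2} (U^{-j})ᵀ (A + (1/(1-B_{jj})) A U_j U_jᵀ A) U_j`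
equals `(B_{kj}/(1-B_{jj})) ⬝ ‖F_k + (B_{kj}/(1-B_{jj})) F_j‖⁻¹`. -/
theorem parsec_rank_one_update_entry {m p : ℕ} (hmp : m ≤ p)
    (U : Matrix (Fin m) (Fin p) ℝ) (hUU : IsUnit (U * Uᵀ).det)
    (j k : Fin p) (hjk : j ≠ k)
    (A : Matrix (Fin m) (Fin m) ℝ) (hA : A = (U * Uᵀ)⁻¹)
    (B : Matrix (Fin p) (Fin p) ℝ) (hB : B = Uᵀ * A * U)
    (F : Matrix (Fin m) (Fin p) ℝ) (hF : F = A * U)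
    (hBjj : B j j ≠ 1) (hBkj : B k j ≠ 0)
    (Uj : Fin m → ℝ) (hUj : Uj = fun i => U i j)
    (Uminus : Matrix (Fin m) {l : Fin p // l ≠ j} ℝ)
    (hUminus : Uminus = Matrix.of fun i (l : {l : Fin p // l ≠ j}) => U i l)
    (hUmUm : IsUnit (Uminus * Uminusᵀ).det)
    (d : {l : Fin p // l ≠ j} → ℝ)
    (hd : d = fun l => (Uminusᵀ * (Uminus * Uminusᵀ)⁻¹ * (Uminus * Uminusᵀ)⁻¹ * Uminus) l l) :
    (Real.sqrt (d ⟨k, fun h => hjk h.symm⟩))⁻¹ *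
        (Uminusᵀ *ᵥ ((A + (1 / (1 - B j j)) • (A * vecMulVec Uj Uj * A)) *ᵥ Uj))
          ⟨k, fun h => hjk h.symm⟩ =
      (B k j / (1 - B j j)) *
        (vecNorm (fun i => F i k + (B k j / (1 - B j j)) * F i j))⁻¹ := by
  have h1Bjj : (1 : ℝ) - B j j ≠ 0 := sub_ne_zero.mpr (Ne.symm hBjj)
  set c' : ℝ := 1 / (1 - B j j) with hc'
  set c : ℝ := B k j / (1 - B j j) with hc
  set P : Matrix (Fin m) (Fin m) ℝ := vecMulVec Uj Uj with hP
  set M : Matrix (Fin m) (Fin m) ℝ := A + c' • (A * P * A) with hMdef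
  -- basic symmetry facts
  have hAsym : Aᵀ = A := by
    rw [hA, transpose_nonsing_inv, transpose_mul, transpose_transpose]
  have hSA : (U * Uᵀ) * A = 1 := by rw [hA]; exact mul_nonsing_inv _ hUU
  have hBsym : B j k = B k j := by
    have hBt : Bᵀ = B := by rw [hB, transpose_mul, transpose_mul, hAsym, transpose_transpose,
      Matrix.mul_assoc]
    calc B j k = Bᵀ k j := rfl
    _ = B k j := by rw [hBt]
  have hPsym : Pᵀ = P := by
    ext i i'; simp [hP, transpose_apply, vecMulVec_apply, mul_comm]
  have hMsym : Mᵀ = M := by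
    rw [hMdef, transpose_add, transpose_smul, transpose_mul, transpose_mul, hAsym, hPsym,
      Matrix.mul_assoc]
  -- A applied to columns of U gives columns of F
  have hAU : ∀ l : Fin p, A *ᵥ (fun i => U i l) = fun i => F i l := by
    intro l; ext i; simp [hF, mulVec, dotProduct, Matrix.mul_apply]
  -- dot products with Uj give entries of B
  have hBdot : ∀ l : Fin p, Uj ⬝ᵥ (A *ᵥ fun i => U i l) = B j l := by
    intro l
    rw [hB, Matrix.mul_assoc, hUj]
    simp only [dotProduct, mulVec, dotProduct, Matrix.mul_apply, transpose_apply]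
  have hBjj' : Uj ⬝ᵥ (A *ᵥ Uj) = B j j := by
    have h := hBdot j
    rw [← hUj] at h
    exact h
  -- P acting on vectors
  have hPv : ∀ w : Fin m → ℝ, P *ᵥ w = (Uj ⬝ᵥ w) • Uj := by
    intro w; ext i
    simp only [hP, mulVec, dotProduct, vecMulVec_apply, Pi.smul_apply, smul_eq_mul,
      Finset.sum_mul]
    exact Finset.sum_congr rfl fun a _ => by ring
  -- key product
  have hPAP : P * A * P = B j j • P := by
    ext i i'
    simp only [Matrix.mul_apply, Matrix.smul_apply, hP, vecMulVec_apply, smul_eq_mul]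
    rw [← hBjj']
    simp only [dotProduct, mulVec, dotProduct, Finset.mul_sum, Finset.sum_mul]
    rw [Finset.sum_comm]
    exact Finset.sum_congr rfl fun b _ => Finset.sum_congr rfl fun a _ => by ring
  -- U^{-j} (U^{-j})ᵀ = U Uᵀ - Uj Ujᵀ
  have hUmm : Uminus * Uminusᵀ = U * Uᵀ - P := by
    ext i i'
    simp only [Matrix.mul_apply, Matrix.sub_apply, transpose_apply, hUminus, of_apply, hP,
      vecMulVec_apply, hUj]
    have hsub : ∑ l : {l : Fin p // l ≠ j}, U i l.1 * U i' l.1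
        = ∑ l ∈ Finset.univ.erase j, U i l * U i' l := by
      rw [Finset.sum_subtype (p := fun l => l ≠ j) (Finset.univ.erase j)
        (fun x => by simp [Finset.mem_erase]) (fun l => U i l * U i' l)]
    rw [hsub, ← Finset.add_sum_erase Finset.univ _ (Finset.mem_univ j)]
    ring
  -- Sherman–Morrison
  have hSM : (Uminus * Uminusᵀ)⁻¹ = M := by
    apply inv_eq_right_inv
    rw [hUmm, hMdef]
    have e1 : (U * Uᵀ) * (A * P * A) = P * A := by
      rw [← Matrix.mul_assoc, ← Matrix.mul_assoc, hSA, Matrix.one_mul]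
    have e2 : P * (A * P * A) = B j j • (P * A) := by
      rw [← Matrix.mul_assoc, ← Matrix.mul_assoc, hPAP, Matrix.smul_mul]
    rw [Matrix.sub_mul, Matrix.mul_add, Matrix.mul_add, _root_.Matrix.mul_smul,
      _root_.Matrix.mul_smul, e1, e2, hSA]
    have hlin : c' • (P * A) - (P * A + c' • (B j j • (P * A)))
        = (c' - 1 - c' * B j j) • (P * A) := by
      rw [sub_smul, sub_smul, one_smul, mul_smul]; abel
    have hz : c' - 1 - c' * B j j = 0 := by rw [hc']; field_simp; ring
    rw [add_sub_assoc, hlin, hz, zero_smul, add_zero]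
  -- M applied to columns of U
  have hMU : ∀ l : Fin p, M *ᵥ (fun i => U i l)
      = fun i => F i l + (c' * B j l) * F i j := by
    intro l
    rw [hMdef, Matrix.add_mulVec, smul_mulVec, ← mulVec_mulVec, ← mulVec_mulVec,
      hPv, hBdot l, mulVec_smul, hUj, hAU j, hAU l]
    ext i
    simp only [Pi.add_apply, Pi.smul_apply, smul_eq_mul]
    ring
  -- the numerator entry
  have hnum : (Uminusᵀ *ᵥ (M *ᵥ Uj)) ⟨k, fun h => hjk h.symm⟩ = c := by
    rw [show M *ᵥ Uj = M *ᵥ (fun i => U i j) from by rw [← hUj], hMU j]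
    simp only [mulVec, dotProduct, transpose_apply, hUminus, of_apply]
    have hBkj' : ∑ i, U i k * F i j = B k j := by
      rw [hB, Matrix.mul_assoc, ← hF]
      simp only [Matrix.mul_apply, transpose_apply]
    have hsum : ∑ i, U i k * (F i j + c' * B j j * F i j)
        = (1 + c' * B j j) * ∑ i, U i k * F i j := by
      rw [Finset.mul_sum]
      exact Finset.sum_congr rfl fun i _ => by ring
    rw [hsum, hBkj', hc, hc']
    field_simp
    ring
  -- relating c' and c
  have hcc : c' * B j k = c := by rw [hBsym, hc, hc']; ring
  -- column entries of M * Uminus at k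
  have hcol : ∀ i, (M * Uminus) i ⟨k, fun h => hjk h.symm⟩ = F i k + c * F i j := by
    intro i
    simp only [Matrix.mul_apply, hUminus, of_apply]
    have h2 : (M *ᵥ fun i' => U i' k) i = ∑ a, M i a * U a k := rfl
    rw [← h2, hMU k, hcc]
  -- the matrix identity for d
  have hT : Uminusᵀ * (Uminus * Uminusᵀ)⁻¹ * (Uminus * Uminusᵀ)⁻¹ * Uminus
      = (M * Uminus)ᵀ * (M * Uminus) := by
    rw [hSM, transpose_mul, hMsym, Matrix.mul_assoc]
  have hdk : d ⟨k, fun h => hjk h.symm⟩ = ∑ i, (F i k + c * F i j) ^ 2 := by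
    rw [hd]
    show (Uminusᵀ * (Uminus * Uminusᵀ)⁻¹ * (Uminus * Uminusᵀ)⁻¹ * Uminus)
      ⟨k, fun h => hjk h.symm⟩ ⟨k, fun h => hjk h.symm⟩ = _
    rw [hT, Matrix.mul_apply]
    simp only [transpose_apply, hcol]
    exact Finset.sum_congr rfl fun i _ => (sq (F i k + c * F i j)).symm
  rw [hnum, hdk]
  have hvn : vecNorm (fun i => F i k + c * F i j)
      = Real.sqrt (∑ i, (F i k + c * F i j) ^ 2) := rfl
  rw [hvn, mul_comm]
end
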